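/- Sample complexity of random Pauli measurements for many observables: with M independent random Pauli-basis measurement settings (each qubit basis uniform in {X,Y,Z}) and single-shot outcomes on copies of an N-qubit state ρ, the median-of-means estimators ô₁,...,ô_L of L Pauli expectation values tr(O_i ρ), each O_i of weight at most w, satisfy max_i |ô_i − tr(O_i ρ)| ≤ ε with probability at least 1−δ provided M ≥ C·3^w·log(2L/δ)/ε², for a universal constant C. -/

import Mathlib

open Matrix
open scoped Classical ComplexOrder

noncomputable section

/-- The Pauli matrices X, Y, Z. -/
def PauliXYZ : Fin 3 → Matrix (Fin 2) (Fin 2) ℂ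
  | 0 => !![0, 1; 1, 0]
  | 1 => !![0, -Complex.I; Complex.I, 0]
  | 2 => !![1, 0; 0, -1]

/-- Eigenprojector `(I ± W)/2` of the Pauli matrix `W` (sign `+` for `b = true`). -/
def pauliProj (w : Fin 3) (b : Bool) : Matrix (Fin 2) (Fin 2) ℂ :=
  (2 : ℂ)⁻¹ • (1 + (if b then (1 : ℂ) else -1) • PauliXYZ w)

/-- A Pauli (`some w`) or the identity (`none`) on one qubit. -/
def pauliOfOpt : Option (Fin 3) → Matrix (Fin 2) (Fin 2) ℂ
  | none => 1
  | some w => PauliXYZ w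

/-- Tensor-product projector onto outcome `lam` of the product Pauli-basis
measurement in bases `W`. -/
def projN {N : ℕ} (W : Fin N → Fin 3) (lam : Fin N → Bool) :
    Matrix (Fin N → Fin 2) (Fin N → Fin 2) ℂ :=
  fun x y => ∏ n, pauliProj (W n) (lam n) (x n) (y n)

/-- The Pauli observable `O = P₁ ⊗ ⋯ ⊗ P_N` as a matrix. -/
def obsMat {N : ℕ} (O : Fin N → Option (Fin 3)) :
    Matrix (Fin N → Fin 2) (Fin N → Fin 2) ℂ :=
  fun x y => ∏ n, pauliOfOpt (O n) (x n) (y n)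

/-- Weight of a Pauli observable. -/
def weight {N : ℕ} (O : Fin N → Option (Fin 3)) : ℕ :=
  (Finset.univ.filter fun n => O n ≠ none).card

/-- Single-setting classical-shadow estimator for the Pauli observable `O`. -/
def shadowEst {N : ℕ} (O : Fin N → Option (Fin 3)) (W : Fin N → Fin 3)
    (lam : Fin N → Bool) : ℝ :=
  if ∀ n p, O n = some p → W n = p then
    3 ^ weight O *
      ∏ n ∈ Finset.univ.filter (fun n => O n ≠ none), (if lam n then (1 : ℝ) else -1)
  else 0

/-- Born probability of outcome `lam` when measuring `ρ` in the product basis `W`. -/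
def born {N : ℕ} (ρ : Matrix (Fin N → Fin 2) (Fin N → Fin 2) ℂ)
    (W : Fin N → Fin 3) (lam : Fin N → Bool) : ℝ :=
  ((ρ * projN W lam).trace).re

/-- A randomized-measurement data set: for each of `B × K` experimental runs,
a uniformly random measurement setting and the observed outcome string. -/
abbrev RMData (N B K : ℕ) := Fin B × Fin K → ((Fin N → Fin 3) × (Fin N → Bool))

/-- Probability mass of a data set: settings i.i.d. uniform on `{X,Y,Z}^N`,
outcomes distributed by Born's rule given the setting. -/
def rmMass {N B K : ℕ} (ρ : Matrix (Fin N → Fin 2) (Fin N → Fin 2) ℂ)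
    (ω : RMData N B K) : ℝ :=
  ∏ r : Fin B × Fin K, ((3 : ℝ)⁻¹ ^ N * born ρ (ω r).1 (ω r).2)

/-- The median of `B` reals (the middle element of the sorted list). -/
def medianFin {B : ℕ} (f : Fin B → ℝ) : ℝ :=
  ((List.ofFn f).insertionSort (· ≤ ·)).getD (B / 2) 0

/-- Median-of-means shadow estimator of `tr(O ρ)` from the data set `ω`. -/
def momEst {N B K : ℕ} (O : Fin N → Option (Fin 3)) (ω : RMData N B K) : ℝ :=
  medianFin fun b : Fin B => (∑ k : Fin K, shadowEst O (ω (b, k)).1 (ω (b, k)).2) / K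

/-!
The single-shot estimator is unbiased with second moment `3 ^ weight O`: a uniformly random
setting is compatible with `O` with probability `3 ^ (-weight O)`, and for a compatible setting
the Born-weighted sum of the outcome signs on `supp O` is `tr(O ρ)`, because on each qubit the
eigenprojectors of a Pauli sum to the identity and their signed sum is the Pauli itself.
By Chebyshev, a batch mean of `K` shots misses `tr(O ρ)` by more than `ε` with probability
`t ≤ 3 ^ w / (K ε²) ≤ 1/12`. The median of `B` independent batch means can only miss if at
least half of the batches miss, which has probability at most `2 ^ B t ^ (B/2) ≤ e ^ (-B/2)`,
i.e. at most `δ / (2L)` for `B ≥ 2 log (2L/δ)`. A union bound over the `L` observables ends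
the proof.
-/

open Finset

section FiniteProbability

variable {Ω ι S : Type*} [Fintype Ω] [Fintype S]

theorem sum_filter_exists_le (I : Finset ι) {g : Ω → ℝ} (hg : ∀ ω, 0 ≤ g ω)
    (P : ι → Ω → Prop) [∀ i, DecidablePred (P i)] [DecidablePred fun ω => ∃ i ∈ I, P i ω] :
    ∑ ω ∈ univ.filter (fun ω => ∃ i ∈ I, P i ω), g ω ≤
      ∑ i ∈ I, ∑ ω ∈ univ.filter (P i), g ω := by
  have hcover : ∀ ω ∈ univ.filter (fun ω => ∃ i ∈ I, P i ω),
      g ω ≤ ∑ i ∈ I, if P i ω then g ω else 0 := by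
    intro ω hω
    obtain ⟨i, hi, hPi⟩ := (mem_filter.1 hω).2
    calc g ω = if P i ω then g ω else 0 := (if_pos hPi).symm
      _ ≤ ∑ j ∈ I, if P j ω then g ω else 0 :=
        single_le_sum (f := fun j => if P j ω then g ω else 0)
          (fun j _ => ite_nonneg (hg ω) le_rfl) hi
  calc ∑ ω ∈ univ.filter (fun ω => ∃ i ∈ I, P i ω), g ω
      ≤ ∑ ω ∈ univ.filter (fun ω => ∃ i ∈ I, P i ω), ∑ i ∈ I, if P i ω then g ω else 0 :=
        sum_le_sum hcover
    _ ≤ ∑ ω, ∑ i ∈ I, if P i ω then g ω else 0 :=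
        sum_le_sum_of_subset_of_nonneg (filter_subset _ _) fun ω _ _ =>
          sum_nonneg fun i _ => ite_nonneg (hg ω) le_rfl
    _ = ∑ i ∈ I, ∑ ω ∈ univ.filter (P i), g ω := by
        rw [sum_comm]
        simp only [sum_filter]

theorem sum_filter_lt_abs_le {p : Ω → ℝ} (hp : ∀ ω, 0 ≤ p ω) (X : Ω → ℝ) {c : ℝ} (hc : 0 < c) :
    ∑ ω ∈ univ.filter (fun ω => c < |X ω|), p ω ≤ (∑ ω, p ω * X ω ^ 2) / c ^ 2 := by
  rw [le_div_iff₀ (by positivity), sum_mul]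
  calc ∑ ω ∈ univ.filter (fun ω => c < |X ω|), p ω * c ^ 2
      ≤ ∑ ω ∈ univ.filter (fun ω => c < |X ω|), p ω * X ω ^ 2 :=
        sum_le_sum fun ω hω => mul_le_mul_of_nonneg_left
          (sq_lt_sq.2 (by rw [abs_of_pos hc]; exact (mem_filter.1 hω).2)).le (hp ω)
    _ ≤ ∑ ω, p ω * X ω ^ 2 :=
        sum_le_sum_of_subset_of_nonneg (filter_subset _ _) fun ω _ _ =>
          mul_nonneg (hp ω) (sq_nonneg _)

theorem sum_mul_sub_sq_eq {p f : S → ℝ} {μ : ℝ} (hp : ∑ σ, p σ = 1)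
    (hmean : ∑ σ, p σ * f σ = μ) :
    ∑ σ, p σ * (f σ - μ) ^ 2 = ∑ σ, p σ * f σ ^ 2 - μ ^ 2 := by
  have hexpand : ∀ σ, p σ * (f σ - μ) ^ 2 = p σ * f σ ^ 2 - 2 * μ * (p σ * f σ) + μ ^ 2 * p σ :=
    fun σ => by ring
  simp only [hexpand, sum_add_distrib, sum_sub_distrib, ← mul_sum, hmean, hp]
  ring

variable {p : S → ℝ}

theorem sum_prod_eq_one [Fintype ι] [DecidableEq ι] (hp : ∑ σ, p σ = 1) :
    ∑ ω : ι → S, ∏ i, p (ω i) = 1 := by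
  rw [← Fintype.prod_sum, hp, prod_const_one]

theorem sum_prod_mul_sum_sq [Fintype ι] [DecidableEq ι] (hp : ∑ σ, p σ = 1) {g : S → ℝ}
    (hg : ∑ σ, p σ * g σ = 0) :
    ∑ ω : ι → S, (∏ i, p (ω i)) * (∑ i, g (ω i)) ^ 2 = Fintype.card ι * ∑ σ, p σ * g σ ^ 2 := by
  have hpair : ∀ i j, ∑ ω : ι → S, (∏ k, p (ω k)) * (g (ω i) * g (ω j)) =
      if i = j then ∑ σ, p σ * g σ ^ 2 else 0 := by
    intro i j
    set h : ι → S → ℝ := fun k σ => p σ * (if k = i then g σ else 1) * (if k = j then g σ else 1)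
    have hfactor : ∀ ω : ι → S, (∏ k, p (ω k)) * (g (ω i) * g (ω j)) = ∏ k, h k (ω k) := by
      intro ω
      simp only [h, prod_mul_distrib, prod_ite_eq', mem_univ, if_true, mul_assoc]
    rw [sum_congr rfl fun ω _ => hfactor ω, ← Fintype.prod_sum h]
    split_ifs with hij
    · subst hij
      rw [Fintype.prod_eq_single i fun k hk => by simp [h, hk, hp]]
      simp [h, sq, mul_assoc]
    · exact prod_eq_zero (mem_univ i) (by simp [h, hij, hg])
  calc ∑ ω : ι → S, (∏ i, p (ω i)) * (∑ i, g (ω i)) ^ 2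
      = ∑ ω : ι → S, ∑ i, ∑ j, (∏ k, p (ω k)) * (g (ω i) * g (ω j)) := by
        simp_rw [sq, sum_mul_sum, mul_sum]
    _ = ∑ i, ∑ j, ∑ ω : ι → S, (∏ k, p (ω k)) * (g (ω i) * g (ω j)) := by
        rw [sum_comm]
        exact sum_congr rfl fun i _ => sum_comm
    _ = Fintype.card ι * ∑ σ, p σ * g σ ^ 2 := by
        simp only [hpair, sum_ite_eq, mem_univ, if_true, sum_const, card_univ, nsmul_eq_mul]

theorem sum_filter_lt_abs_mean_sub_le (hp₀ : ∀ σ, 0 ≤ p σ) (hp : ∑ σ, p σ = 1) {f : S → ℝ}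
    {μ V ε : ℝ} (hε : 0 < ε) (hmean : ∑ σ, p σ * f σ = μ)
    (hvar : ∑ σ, p σ * (f σ - μ) ^ 2 ≤ V) {K : ℕ} (hK : 0 < K) :
    ∑ ω ∈ univ.filter (fun ω : Fin K → S => ε < |(∑ k, f (ω k)) / K - μ|), ∏ k, p (ω k) ≤
      V / (K * ε ^ 2) := by
  have hK' : (0 : ℝ) < K := Nat.cast_pos.2 hK
  have hcentre : ∀ ω : Fin K → S, (∑ k, f (ω k)) / K - μ = (∑ k, (f (ω k) - μ)) / K := by
    intro ω
    rw [sum_sub_distrib, sum_const, card_univ, Fintype.card_fin, nsmul_eq_mul]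
    field_simp
  have hcentred : ∑ σ, p σ * (f σ - μ) = 0 := by
    simp only [mul_sub, sum_sub_distrib, hmean, ← sum_mul, hp, one_mul, sub_self]
  have hsecond : ∑ ω : Fin K → S, (∏ k, p (ω k)) * ((∑ k, f (ω k)) / K - μ) ^ 2 =
      (∑ σ, p σ * (f σ - μ) ^ 2) / K :=
    calc _ = (∑ ω : Fin K → S, (∏ k, p (ω k)) * (∑ k, (f (ω k) - μ)) ^ 2) / K ^ 2 := by
          simp only [hcentre, div_pow, ← mul_div_assoc, ← sum_div]
      _ = K * (∑ σ, p σ * (f σ - μ) ^ 2) / K ^ 2 := by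
          rw [sum_prod_mul_sum_sq hp hcentred, Fintype.card_fin]
      _ = _ := by field_simp
  calc _ ≤ (∑ ω : Fin K → S, (∏ k, p (ω k)) * ((∑ k, f (ω k)) / K - μ) ^ 2) / ε ^ 2 :=
        sum_filter_lt_abs_le (fun ω => prod_nonneg fun k _ => hp₀ (ω k)) _ hε
    _ ≤ V / (K * ε ^ 2) := by
        rw [hsecond, div_div]
        gcongr

theorem sum_filter_forall_mem_prod [Fintype ι] [DecidableEq ι] (hp : ∑ σ, p σ = 1)
    (E : S → Prop) [DecidablePred E] (s : Finset ι) :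
    ∑ τ ∈ univ.filter (fun τ : ι → S => ∀ b ∈ s, E (τ b)), ∏ b, p (τ b) =
      (∑ σ ∈ univ.filter E, p σ) ^ #s := by
  have hfilter : univ.filter (fun τ : ι → S => ∀ b ∈ s, E (τ b)) =
      Fintype.piFinset fun b => if b ∈ s then univ.filter E else univ := by
    ext τ
    simp only [mem_filter, mem_univ, true_and, Fintype.mem_piFinset]
    refine ⟨fun h b => ?_, fun h b hb => ?_⟩
    · split_ifs with hb
      · exact mem_filter.2 ⟨mem_univ _, h b hb⟩
      · exact mem_univ _
    · simpa [hb] using h b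
  rw [hfilter, ← prod_univ_sum]
  simp only [apply_ite (fun u : Finset S => ∑ σ ∈ u, p σ), hp, prod_ite_mem, univ_inter,
    prod_const]

theorem sum_filter_le_card_filter_le [Fintype ι] [DecidableEq ι] (hp₀ : ∀ σ, 0 ≤ p σ)
    (hp : ∑ σ, p σ = 1) (E : S → Prop) [DecidablePred E] (m : ℕ) :
    ∑ τ ∈ univ.filter (fun τ : ι → S => m ≤ #(univ.filter fun b => E (τ b))), ∏ b, p (τ b) ≤
      2 ^ Fintype.card ι * (∑ σ ∈ univ.filter E, p σ) ^ m := by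
  have hweight : ∀ τ : ι → S, 0 ≤ ∏ b, p (τ b) := fun τ => prod_nonneg fun b _ => hp₀ (τ b)
  calc _ ≤ ∑ τ ∈ univ.filter (fun τ : ι → S =>
          ∃ s ∈ powersetCard m (univ : Finset ι), ∀ b ∈ s, E (τ b)), ∏ b, p (τ b) := by
        refine sum_le_sum_of_subset_of_nonneg (fun τ hτ => ?_) fun τ _ _ => hweight τ
        obtain ⟨s, hs, hcard⟩ := exists_subset_card_eq (mem_filter.1 hτ).2
        exact mem_filter.2 ⟨mem_univ _, s, mem_powersetCard.2 ⟨subset_univ s, hcard⟩,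
          fun b hb => (mem_filter.1 (hs hb)).2⟩
    _ ≤ ∑ s ∈ powersetCard m (univ : Finset ι),
          ∑ τ ∈ univ.filter (fun τ : ι → S => ∀ b ∈ s, E (τ b)), ∏ b, p (τ b) :=
        sum_filter_exists_le _ hweight fun s τ => ∀ b ∈ s, E (τ b)
    _ = #(powersetCard m (univ : Finset ι)) * (∑ σ ∈ univ.filter E, p σ) ^ m := by
        rw [sum_congr rfl fun s hs => by
          rw [sum_filter_forall_mem_prod hp, (mem_powersetCard.1 hs).2], sum_const, nsmul_eq_mul]
    _ ≤ 2 ^ Fintype.card ι * (∑ σ ∈ univ.filter E, p σ) ^ m := by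
        gcongr
        · exact pow_nonneg (sum_nonneg fun σ _ => hp₀ σ) m
        · rw [card_powersetCard, card_univ]
          exact_mod_cast Nat.choose_le_two_pow _ _

end FiniteProbability

theorem List.countP_ofFn {α : Type*} {B : ℕ} (X : Fin B → α) (P : α → Prop) [DecidablePred P] :
    (List.ofFn X).countP (fun x => decide (P x)) = #(univ.filter fun b => P (X b)) := by
  rw [← Multiset.coe_countP, ← Fin.univ_val_map, Multiset.countP_map]
  rfl

section Median

variable {α : Type*} [LinearOrder α] {s : List α}

theorem List.Pairwise.countP_le_of_lt_getElem (hs : s.Pairwise (· ≤ ·)) {i : ℕ}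
    (hi : i < s.length) {c : α} (h : c < s[i]) : s.countP (· ≤ c) ≤ i := by
  have hdrop : (s.drop i).countP (· ≤ c) = 0 := by
    refine List.countP_eq_zero.2 fun x hx => ?_
    obtain ⟨j, hj, rfl⟩ := List.mem_iff_getElem.1 hx
    rw [List.getElem_drop, decide_eq_true_eq, not_le]
    exact h.trans_le (hs.rel_get_of_le (a := ⟨i, hi⟩) (b := ⟨i + j, by simp at hj; omega⟩)
      (Fin.mk_le_mk.2 (Nat.le_add_right i j)))
  rw [← List.take_append_drop i s, List.countP_append, hdrop, add_zero]
  exact (List.countP_le_length).trans (List.length_take_le i s)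

theorem List.Pairwise.countP_ge_le_of_getElem_lt (hs : s.Pairwise (· ≤ ·)) {i : ℕ}
    (hi : i < s.length) {c : α} (h : s[i] < c) :
    s.countP (c ≤ ·) ≤ s.length - (i + 1) := by
  have htake : (s.take (i + 1)).countP (c ≤ ·) = 0 := by
    refine List.countP_eq_zero.2 fun x hx => ?_
    obtain ⟨j, hj, rfl⟩ := List.mem_iff_getElem.1 hx
    rw [List.getElem_take, decide_eq_true_eq, not_le]
    exact (hs.rel_get_of_le (a := ⟨j, by simp at hj; omega⟩) (b := ⟨i, hi⟩)
      (Fin.mk_le_mk.2 (by simp at hj; omega))).trans_lt h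
  conv_lhs => rw [← List.take_append_drop (i + 1) s]
  rw [List.countP_append, htake, zero_add]
  exact List.countP_le_length.trans List.length_drop.le

theorem abs_medianFin_sub_le {B : ℕ} (X : Fin B → ℝ) {μ ε : ℝ}
    (h : B / 2 < #(univ.filter fun b => |X b - μ| ≤ ε)) : |medianFin X - μ| ≤ ε := by
  set s := (List.ofFn X).insertionSort (· ≤ ·)
  have hs : s.Pairwise (· ≤ ·) := List.pairwise_insertionSort _ _
  have hcount : ∀ (P : ℝ → Prop) [DecidablePred P],
      s.countP (fun x => decide (P x)) = #(univ.filter fun b => P (X b)) := fun P _ => by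
    rw [(List.perm_insertionSort _ _).countP_eq, List.countP_ofFn]
  have hlen : s.length = B := (List.perm_insertionSort _ _).length_eq.trans (List.length_ofFn)
  have hB : #(univ.filter fun b => |X b - μ| ≤ ε) ≤ B := (card_filter_le _ _).trans (by simp)
  have hi : B / 2 < s.length := by omega
  have hmed : medianFin X = s[B / 2] := List.getD_eq_getElem s 0 hi
  have hgood : ∀ P : ℝ → Prop, (∀ x, |x - μ| ≤ ε → P x) →
      B / 2 < #(univ.filter fun b => P (X b)) := fun P hP =>
    h.trans_le (card_le_card (monotone_filter_right _ fun b _ hb => hP _ hb))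
  rw [hmed, abs_le]
  constructor
  · by_contra hlt
    have := hs.countP_ge_le_of_getElem_lt hi (c := μ - ε) (by linarith)
    have := hgood (fun x => μ - ε ≤ x) fun x hx => by linarith [abs_le.1 hx]
    rw [hcount] at *
    omega
  · by_contra hlt
    have := hs.countP_le_of_lt_getElem hi (c := μ + ε) (by linarith)
    have := hgood (fun x => x ≤ μ + ε) fun x hx => by linarith [abs_le.1 hx]
    rw [hcount] at *
    omega

end Median

theorem sum_filter_lt_abs_medianFin_sub_le {S : Type*} [Fintype S] {p : S → ℝ}
    (hp₀ : ∀ σ, 0 ≤ p σ) (hp : ∑ σ, p σ = 1) {f : S → ℝ} {μ V ε : ℝ} (hε : 0 < ε)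
    (hmean : ∑ σ, p σ * f σ = μ) (hvar : ∑ σ, p σ * (f σ - μ) ^ 2 ≤ V) (B : ℕ) {K : ℕ}
    (hK : 0 < K) :
    ∑ ω ∈ univ.filter (fun ω : Fin B × Fin K → S =>
        ε < |medianFin (fun b => (∑ k, f (ω (b, k))) / K) - μ|), ∏ r, p (ω r) ≤
      2 ^ B * (V / (K * ε ^ 2)) ^ (B - B / 2) := by
  set bad : (Fin K → S) → Prop := fun τ => ε < |(∑ k, f (τ k)) / K - μ|
  have hbatch₀ : ∀ τ : Fin K → S, 0 ≤ ∏ k, p (τ k) := fun τ => prod_nonneg fun k _ => hp₀ (τ k)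
  have hmany : ∀ τ : Fin B → Fin K → S, ε < |medianFin (fun b => (∑ k, f (τ b k)) / K) - μ| →
      B - B / 2 ≤ #(univ.filter fun b => bad (τ b)) := by
    intro τ hτ
    by_contra hfew
    have hsplit := card_filter_add_card_filter_not (s := univ) fun b => bad (τ b)
    simp only [bad, not_lt, card_univ, Fintype.card_fin] at hsplit hfew
    exact hτ.not_ge (abs_medianFin_sub_le _ (by omega))
  calc _ = ∑ τ ∈ univ.filter (fun τ : Fin B → Fin K → S =>
          ε < |medianFin (fun b => (∑ k, f (τ b k)) / K) - μ|), ∏ b, ∏ k, p (τ b k) := by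
        rw [sum_filter, sum_filter]
        exact Fintype.sum_equiv (Equiv.curry _ _ _) _ _ fun ω => by
          rw [Fintype.prod_prod_type]; rfl
    _ ≤ ∑ τ ∈ univ.filter (fun τ : Fin B → Fin K → S =>
          B - B / 2 ≤ #(univ.filter fun b => bad (τ b))), ∏ b, ∏ k, p (τ b k) :=
        sum_le_sum_of_subset_of_nonneg (monotone_filter_right _ fun τ _ => hmany τ)
          fun τ _ _ => prod_nonneg fun b _ => hbatch₀ (τ b)
    _ ≤ 2 ^ B * (∑ τ ∈ univ.filter bad, ∏ k, p (τ k)) ^ (B - B / 2) := by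
        simpa only [Fintype.card_fin] using
          sum_filter_le_card_filter_le (ι := Fin B) hbatch₀ (sum_prod_eq_one hp) bad (B - B / 2)
    _ ≤ 2 ^ B * (V / (K * ε ^ 2)) ^ (B - B / 2) := by
        gcongr
        · exact sum_nonneg fun τ _ => hbatch₀ τ
        · exact sum_filter_lt_abs_mean_sub_le hp₀ hp hε hmean hvar hK

section PiKronecker

variable {ι α β R : Type*} [Fintype ι] [CommSemiring R]

def piKronecker (A : ι → Matrix α β R) : Matrix (ι → α) (ι → β) R :=
  fun x y => ∏ i, A i (x i) (y i)

theorem piKronecker_apply (A : ι → Matrix α β R) (x : ι → α) (y : ι → β) :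
    piKronecker A x y = ∏ i, A i (x i) (y i) := rfl

theorem piKronecker_mul {γ : Type*} [Fintype β] [DecidableEq ι] (A : ι → Matrix α β R)
    (B : ι → Matrix β γ R) :
    piKronecker A * piKronecker B = piKronecker fun i => A i * B i := by
  ext x z
  simp only [Matrix.mul_apply, piKronecker_apply, ← prod_mul_distrib]
  exact (Fintype.prod_sum fun i b => A i (x i) b * B i b (z i)).symm

theorem piKronecker_one [DecidableEq α] : piKronecker (fun _ : ι => (1 : Matrix α α R)) = 1 := by
  ext x y
  simp only [piKronecker_apply, Matrix.one_apply, prod_boole, mem_univ, true_implies, funext_iff]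

theorem piKronecker_conjTranspose [StarRing R] (A : ι → Matrix α β R) :
    (piKronecker A)ᴴ = piKronecker fun i => (A i)ᴴ := by
  ext x y
  simp only [Matrix.conjTranspose_apply, piKronecker_apply, star_prod]

theorem sum_smul_piKronecker {κ : Type*} [Fintype κ] [DecidableEq ι] (c : ι → κ → R)
    (A : ι → κ → Matrix α β R) :
    ∑ k : ι → κ, (∏ i, c i (k i)) • piKronecker (fun i => A i (k i)) =
      piKronecker fun i => ∑ b, c i b • A i b := by
  ext x y
  simp only [Matrix.sum_apply, Matrix.smul_apply, piKronecker_apply, smul_eq_mul,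
    ← prod_mul_distrib]
  exact (Fintype.prod_sum fun i b => c i b * A i b (x i) (y i)).symm

end PiKronecker

theorem PauliXYZ_mul_self (w : Fin 3) : PauliXYZ w * PauliXYZ w = 1 := by
  fin_cases w <;> ext i j <;> fin_cases i <;> fin_cases j <;>
    simp [PauliXYZ, Matrix.mul_apply, Fin.sum_univ_two]

theorem PauliXYZ_conjTranspose (w : Fin 3) : (PauliXYZ w)ᴴ = PauliXYZ w := by
  fin_cases w <;> ext i j <;> fin_cases i <;> fin_cases j <;> simp [PauliXYZ]

theorem pauliProj_mul_self (w : Fin 3) (b : Bool) :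
    pauliProj w b * pauliProj w b = pauliProj w b := by
  cases b <;>
  · simp only [pauliProj, Matrix.smul_mul, Matrix.mul_smul, Matrix.add_mul, Matrix.mul_add,
      Matrix.one_mul, Matrix.mul_one, smul_mul_smul, PauliXYZ_mul_self, Bool.false_eq_true,
      if_true, if_false]
    module

theorem pauliProj_conjTranspose (w : Fin 3) (b : Bool) : (pauliProj w b)ᴴ = pauliProj w b := by
  cases b <;> simp [pauliProj, Matrix.conjTranspose_add, PauliXYZ_conjTranspose]

theorem sum_pauliProj (w : Fin 3) : ∑ b, pauliProj w b = 1 := by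
  simp only [pauliProj, Fintype.sum_bool, if_true, Bool.false_eq_true, if_false]
  module

theorem sum_sign_smul_pauliProj (w : Fin 3) :
    ∑ b, (if b then (1 : ℂ) else -1) • pauliProj w b = PauliXYZ w := by
  simp only [pauliProj, Fintype.sum_bool, if_true, Bool.false_eq_true, if_false]
  module

section Measurement

variable {N : ℕ}

def Compatible (O : Fin N → Option (Fin 3)) (W : Fin N → Fin 3) : Prop :=
  ∀ n p, O n = some p → W n = p

theorem projN_eq_piKronecker (W : Fin N → Fin 3) (lam : Fin N → Bool) :
    projN W lam = piKronecker fun n => pauliProj (W n) (lam n) := rfl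

theorem obsMat_eq_piKronecker (O : Fin N → Option (Fin 3)) :
    obsMat O = piKronecker fun n => pauliOfOpt (O n) := rfl

theorem projN_mul_self (W : Fin N → Fin 3) (lam : Fin N → Bool) :
    projN W lam * projN W lam = projN W lam := by
  simp only [projN_eq_piKronecker, piKronecker_mul, pauliProj_mul_self]

theorem projN_conjTranspose (W : Fin N → Fin 3) (lam : Fin N → Bool) :
    (projN W lam)ᴴ = projN W lam := by
  simp only [projN_eq_piKronecker, piKronecker_conjTranspose, pauliProj_conjTranspose]

theorem sum_projN (W : Fin N → Fin 3) : ∑ lam, projN W lam = 1 := by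
  have h := sum_smul_piKronecker (fun _ _ => (1 : ℂ)) fun n b => pauliProj (W n) b
  simp only [prod_const_one, one_smul, sum_pauliProj, piKronecker_one] at h
  exact h

theorem sum_sign_smul_projN {O : Fin N → Option (Fin 3)} {W : Fin N → Fin 3}
    (hW : Compatible O W) :
    ∑ lam, (∏ n, if O n ≠ none then (if lam n then (1 : ℂ) else -1) else 1) • projN W lam =
      obsMat O := by
  have h := sum_smul_piKronecker (fun n b => if O n ≠ none then (if b then (1 : ℂ) else -1) else 1)
    fun n b => pauliProj (W n) b
  simp only [← projN_eq_piKronecker] at h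
  rw [h, obsMat_eq_piKronecker]
  congr 1
  funext n
  cases hO : O n with
  | none =>
    simp only [ne_eq, not_true_eq_false, if_false, one_smul, pauliOfOpt]
    exact sum_pauliProj _
  | some p =>
    simp only [ne_eq, reduceCtorEq, not_false_eq_true, if_true, pauliOfOpt, hW n p hO]
    exact sum_sign_smul_pauliProj p

variable (ρ : Matrix (Fin N → Fin 2) (Fin N → Fin 2) ℂ)

theorem born_nonneg (hρ : ρ.PosSemidef) (W : Fin N → Fin 3) (lam : Fin N → Bool) :
    0 ≤ born ρ W lam := by
  set P := projN W lam
  have hsandwich : (ρ * P).trace = (Pᴴ * ρ * P).trace := by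
    rw [trace_mul_cycle, projN_conjTranspose, projN_mul_self, trace_mul_comm]
  exact (Complex.nonneg_iff.1 (hsandwich ▸ (hρ.conjTranspose_mul_mul_same P).trace_nonneg)).1

theorem sum_born (hρ₁ : ρ.trace = 1) (W : Fin N → Fin 3) : ∑ lam, born ρ W lam = 1 := by
  simp only [born, ← Complex.re_sum, ← trace_sum, ← Matrix.mul_sum, sum_projN, Matrix.mul_one,
    hρ₁, Complex.one_re]

theorem sum_born_mul_sign {O : Fin N → Option (Fin 3)} {W : Fin N → Fin 3} (hW : Compatible O W) :
    ∑ lam, born ρ W lam * ∏ n ∈ univ.filter (fun n => O n ≠ none), (if lam n then (1 : ℝ) else -1)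
      = ((obsMat O * ρ).trace).re := by
  have hcast : ∀ lam : Fin N → Bool,
      ((∏ n ∈ univ.filter (fun n => O n ≠ none), (if lam n then (1 : ℝ) else -1) : ℝ) : ℂ) =
        ∏ n, if O n ≠ none then (if lam n then (1 : ℂ) else -1) else 1 := by
    intro lam
    push_cast [prod_filter, apply_ite]
    rfl
  have hterm : ∀ lam : Fin N → Bool,
      born ρ W lam * ∏ n ∈ univ.filter (fun n => O n ≠ none), (if lam n then (1 : ℝ) else -1) =
        (ρ * (∏ n, if O n ≠ none then (if lam n then (1 : ℂ) else -1) else 1) •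
          projN W lam).trace.re := by
    intro lam
    rw [Matrix.mul_smul, trace_smul, smul_eq_mul, ← hcast, Complex.re_ofReal_mul, born, mul_comm]
  rw [sum_congr rfl fun lam _ => hterm lam, ← Complex.re_sum, ← trace_sum, ← Matrix.mul_sum,
    sum_sign_smul_projN hW, trace_mul_comm]

end Measurement

section ShadowEstimator

variable {N : ℕ} (ρ : Matrix (Fin N → Fin 2) (Fin N → Fin 2) ℂ)

def singleShotProb (σ : (Fin N → Fin 3) × (Fin N → Bool)) : ℝ :=
  (3 : ℝ)⁻¹ ^ N * born ρ σ.1 σ.2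

theorem singleShotProb_nonneg (hρ : ρ.PosSemidef) (σ : (Fin N → Fin 3) × (Fin N → Bool)) :
    0 ≤ singleShotProb ρ σ :=
  mul_nonneg (by positivity) (born_nonneg ρ hρ σ.1 σ.2)

theorem sum_singleShotProb (hρ₁ : ρ.trace = 1) : ∑ σ, singleShotProb ρ σ = 1 := by
  simp only [singleShotProb, Fintype.sum_prod_type, ← mul_sum, sum_born ρ hρ₁, mul_one, sum_const,
    card_univ, Fintype.card_fun, Fintype.card_fin, nsmul_eq_mul]
  push_cast
  rw [inv_pow, inv_mul_cancel₀ (by positivity)]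

theorem card_compatible_mul (O : Fin N → Option (Fin 3)) :
    #(univ.filter (Compatible O)) * 3 ^ weight O = 3 ^ N := by
  have hfilter : univ.filter (Compatible O) =
      Fintype.piFinset fun n => (O n).elim univ singleton := by
    ext W
    simp only [mem_filter, mem_univ, true_and, Fintype.mem_piFinset, Compatible]
    refine forall_congr' fun n => ?_
    cases O n <;> simp [eq_comm]
  have hweight : 3 ^ weight O = ∏ n, if O n ≠ none then 3 else 1 := by
    rw [weight, ← prod_const, prod_filter]
  rw [hfilter, Fintype.card_piFinset, hweight, ← prod_mul_distrib, ← Fin.prod_const]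
  refine prod_congr rfl fun n _ => ?_
  cases O n <;> simp

theorem sum_singleShotProb_mul_of_compatible (O : Fin N → Option (Fin 3))
    {F : (Fin N → Fin 3) → (Fin N → Bool) → ℝ} {a : ℝ}
    (hF : ∀ W, ∑ lam, born ρ W lam * F W lam = if Compatible O W then 3 ^ weight O * a else 0) :
    ∑ σ, singleShotProb ρ σ * F σ.1 σ.2 = a := by
  have hcard : (3 : ℝ)⁻¹ ^ N * #(univ.filter (Compatible O)) * 3 ^ weight O = 1 := by
    rw [mul_assoc, ← Nat.cast_ofNat, ← Nat.cast_pow, ← Nat.cast_mul, card_compatible_mul,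
      Nat.cast_pow, inv_pow, inv_mul_cancel₀ (by positivity)]
  simp only [singleShotProb, Fintype.sum_prod_type, mul_assoc, ← mul_sum, hF]
  rw [sum_ite, sum_const_zero, add_zero, sum_const, nsmul_eq_mul]
  linear_combination a * hcard

theorem shadowEst_of_compatible {O : Fin N → Option (Fin 3)} {W : Fin N → Fin 3}
    (hW : Compatible O W) (lam : Fin N → Bool) :
    shadowEst O W lam =
      3 ^ weight O * ∏ n ∈ univ.filter (fun n => O n ≠ none), (if lam n then (1 : ℝ) else -1) :=
  if_pos hW

theorem shadowEst_of_not_compatible {O : Fin N → Option (Fin 3)} {W : Fin N → Fin 3}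
    (hW : ¬Compatible O W) (lam : Fin N → Bool) : shadowEst O W lam = 0 :=
  if_neg hW

theorem sum_singleShotProb_mul_shadowEst (O : Fin N → Option (Fin 3)) :
    ∑ σ, singleShotProb ρ σ * shadowEst O σ.1 σ.2 = ((obsMat O * ρ).trace).re := by
  refine sum_singleShotProb_mul_of_compatible ρ O fun W => ?_
  split_ifs with hW
  · simp only [shadowEst_of_compatible hW, mul_left_comm _ (3 ^ weight O : ℝ), ← mul_sum,
      sum_born_mul_sign ρ hW]
  · simp only [shadowEst_of_not_compatible hW, mul_zero, sum_const_zero]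

theorem sum_singleShotProb_mul_shadowEst_sq (hρ₁ : ρ.trace = 1) (O : Fin N → Option (Fin 3)) :
    ∑ σ, singleShotProb ρ σ * shadowEst O σ.1 σ.2 ^ 2 = 3 ^ weight O := by
  refine sum_singleShotProb_mul_of_compatible ρ O (F := fun W lam => shadowEst O W lam ^ 2)
    fun W => ?_
  split_ifs with hW
  · have hsign : ∀ lam : Fin N → Bool,
        (∏ n ∈ univ.filter (fun n => O n ≠ none), (if lam n then (1 : ℝ) else -1)) ^ 2 = 1 :=
      fun lam => by rw [← prod_pow]; exact prod_eq_one fun n _ => by split_ifs <;> norm_num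
    simp only [shadowEst_of_compatible hW, mul_pow, hsign, mul_one, ← sum_mul, sum_born ρ hρ₁,
      one_mul]
    ring
  · simp only [shadowEst_of_not_compatible hW, zero_pow two_ne_zero, mul_zero, sum_const_zero]

theorem sum_singleShotProb_mul_shadowEst_sub_sq_le (hρ₁ : ρ.trace = 1)
    (O : Fin N → Option (Fin 3)) :
    ∑ σ, singleShotProb ρ σ * (shadowEst O σ.1 σ.2 - ((obsMat O * ρ).trace).re) ^ 2 ≤
      3 ^ weight O := by
  rw [sum_mul_sub_sq_eq (sum_singleShotProb ρ hρ₁) (sum_singleShotProb_mul_shadowEst ρ O),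
    sum_singleShotProb_mul_shadowEst_sq ρ hρ₁]
  nlinarith [sq_nonneg ((obsMat O * ρ).trace).re]

end ShadowEstimator

theorem two_pow_mul_pow_le_exp_neg {t r : ℝ} {B m : ℕ} (ht₀ : 0 ≤ t) (ht : t ≤ 1 / 12)
    (hm : B ≤ 2 * m) (hr : 2 * r ≤ B) : 2 ^ B * t ^ m ≤ Real.exp (-r) := by
  have h4t : 4 * t ≤ Real.exp (-1) :=
    calc 4 * t ≤ 3⁻¹ := by linarith
      _ ≤ Real.exp (-1) := by
        rw [Real.exp_neg]
        exact inv_anti₀ (Real.exp_pos 1) Real.exp_one_lt_three.le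
  -- comparing squares turns `t ^ m` with `B ≤ 2 * m` into the `B`-th power of `4 * t`
  refine le_of_pow_le_pow_left₀ two_ne_zero (Real.exp_pos _).le ?_
  calc (2 ^ B * t ^ m) ^ 2 = (2 ^ 2) ^ B * t ^ (2 * m) := by
        rw [mul_pow, ← pow_mul, ← pow_mul, ← pow_mul, mul_comm B, mul_comm m]
    _ ≤ (2 ^ 2) ^ B * t ^ B :=
        mul_le_mul_of_nonneg_left (pow_le_pow_of_le_one ht₀ (by linarith) hm) (by positivity)
    _ = (4 * t) ^ B := by rw [← mul_pow]; norm_num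
    _ ≤ Real.exp (-1) ^ B := by gcongr
    _ ≤ Real.exp (-r) ^ 2 := by
        rw [← Real.exp_nat_mul, ← Real.exp_nat_mul, Real.exp_le_exp]
        push_cast
        linarith

theorem sum_filter_lt_abs_momEst_sub_le {N B K w : ℕ}
    {ρ : Matrix (Fin N → Fin 2) (Fin N → Fin 2) ℂ} (hρ : ρ.PosSemidef) (hρ₁ : ρ.trace = 1)
    {O : Fin N → Option (Fin 3)} (hO : weight O ≤ w) {ε : ℝ} (hε : 0 < ε) (hK : 0 < K) :
    ∑ ω ∈ univ.filter (fun ω : RMData N B K =>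
        ε < |momEst O ω - ((obsMat O * ρ).trace).re|), rmMass ρ ω ≤
      2 ^ B * (3 ^ w / (K * ε ^ 2)) ^ (B - B / 2) :=
  sum_filter_lt_abs_medianFin_sub_le (singleShotProb_nonneg ρ hρ) (sum_singleShotProb ρ hρ₁) hε
    (sum_singleShotProb_mul_shadowEst ρ O)
    ((sum_singleShotProb_mul_shadowEst_sub_sq_le ρ hρ₁ O).trans
      (pow_le_pow_right₀ (by norm_num) hO)) B hK

/-- Sample complexity of random Pauli measurements for many observables
(Theorem 1, Pauli case): there is a universal constant `C` such that, with
`B = ⌈2 log(2L/δ)⌉` batches of `K ≥ C·3^w/ε²` single-shot random Pauli-basis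
measurements each (so `M = B·K ≥ C'·3^w log(2L/δ)/ε²` in total), the
median-of-means estimators of any `L` Pauli observables of weight at most `w`
are all within `ε` of `tr(O_i ρ)` except with probability at most `δ`. -/
theorem random_pauli_sample_complexity :
    ∃ C : ℝ, 0 < C ∧
      ∀ (N L B K w : ℕ) (ρ : Matrix (Fin N → Fin 2) (Fin N → Fin 2) ℂ),
        ρ.PosSemidef → ρ.trace = 1 →
        ∀ (O : Fin L → Fin N → Option (Fin 3)), (∀ i, weight (O i) ≤ w) →
        ∀ (ε δ : ℝ), 0 < ε → 0 < δ → δ < 1 → 1 ≤ L →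
        B = ⌈2 * Real.log (2 * L / δ)⌉₊ →
        C * 3 ^ w / ε ^ 2 ≤ K →
        ∑ ω ∈ Finset.univ.filter (fun ω : RMData N B K =>
            ∃ i : Fin L, ε < |momEst (O i) ω - ((obsMat (O i) * ρ).trace).re|),
          rmMass ρ ω ≤ δ := by
  refine ⟨12, by norm_num, fun N L B K w ρ hρ hρ₁ O hO ε δ hε hδ _ hL hB hK => ?_⟩
  have hKpos : 0 < K := by
    exact_mod_cast (show (0 : ℝ) < 12 * 3 ^ w / ε ^ 2 by positivity).trans_le hK
  have ht : 3 ^ w / (K * ε ^ 2) ≤ (1 : ℝ) / 12 := by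
    rw [div_le_div_iff₀ (by positivity) (by norm_num)]
    have := (div_le_iff₀ (by positivity)).1 hK
    linarith
  have hL' : (0 : ℝ) < L := by exact_mod_cast hL
  have hper : ∀ i, ∑ ω ∈ univ.filter (fun ω : RMData N B K =>
      ε < |momEst (O i) ω - ((obsMat (O i) * ρ).trace).re|), rmMass ρ ω ≤ δ / (2 * L) := fun i =>
    calc _ ≤ 2 ^ B * (3 ^ w / (K * ε ^ 2)) ^ (B - B / 2) :=
          sum_filter_lt_abs_momEst_sub_le hρ hρ₁ (hO i) hε hKpos
      _ ≤ Real.exp (-Real.log (2 * L / δ)) :=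
          two_pow_mul_pow_le_exp_neg (by positivity) ht (by omega) (hB ▸ Nat.le_ceil _)
      _ = δ / (2 * L) := by rw [Real.exp_neg, Real.exp_log (by positivity), inv_div]
  calc _ = ∑ ω ∈ univ.filter (fun ω : RMData N B K =>
          ∃ i ∈ univ, ε < |momEst (O i) ω - ((obsMat (O i) * ρ).trace).re|), rmMass ρ ω := by
        simp only [mem_univ, true_and]
    _ ≤ ∑ i, δ / (2 * L) := (sum_filter_exists_le _
          (fun ω => prod_nonneg fun r _ => singleShotProb_nonneg ρ hρ (ω r)) _).trans
          (sum_le_sum fun i _ => hper i)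
    _ ≤ δ := by
        rw [sum_const, card_univ, Fintype.card_fin, nsmul_eq_mul, mul_div_left_comm,
          div_mul_cancel_right₀ hL'.ne']
        linarith
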